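/- Let θ_1 < θ_2 < ⋯ < θ_n be real types with allocations x ∈ X^n and transfers t ∈ ℝ^n. If x is nondecreasing (x_1 ≤ ⋯ ≤ x_n) and the local downward constraint IC[(i+1)→i] binds (holds with equality) for every i = 1, …, n−1, then all upward IC constraints are satisfied: IC[i→j] holds for all i < j. -/

import Mathlib

/-!
Fix a type `θ i`. When type `θ (k+1)` is indifferent between its own contract and that of
`θ k`, the transfer gap `t (k+1) - t k` equals the utility gain `θ (k+1)` gets from the larger
allocation; by increasing differences the lower type `θ i` gains no more, so it weakly prefers
contract `k` to contract `k+1`. Hence type `θ i`'s payoff from contract `k` is antitone in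
`k ≥ i`, which gives every upward constraint.
-/

def StrictIncreasingDifferences (X : Set ℝ) (u : ℝ → ℝ → ℝ) : Prop :=
  ∀ x ∈ X, ∀ x' ∈ X, x < x' → ∀ θ θ' : ℝ, θ < θ' → u x' θ - u x θ < u x' θ' - u x θ'

namespace StrictIncreasingDifferences

variable {X : Set ℝ} {u : ℝ → ℝ → ℝ}

theorem sub_le_sub (hu : StrictIncreasingDifferences X u) {x x' θ θ' : ℝ}
    (hx : x ∈ X) (hx' : x' ∈ X) (hxx' : x ≤ x') (hθθ' : θ ≤ θ') :
    u x' θ - u x θ ≤ u x' θ' - u x θ' := by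
  rcases hxx'.lt_or_eq with hlt | rfl
  · rcases hθθ'.lt_or_eq with hθlt | rfl
    · exact (hu x hx x' hx' hlt θ θ' hθlt).le
    · exact le_rfl
  · simp

theorem payoff_le_of_indifferent (hu : StrictIncreasingDifferences X u) {x x' θ θ' t t' : ℝ}
    (hx : x ∈ X) (hx' : x' ∈ X) (hxx' : x ≤ x') (hθθ' : θ ≤ θ')
    (hindiff : u x' θ' - t' = u x θ' - t) :
    u x' θ - t' ≤ u x θ - t := by
  linarith [hu.sub_le_sub hx hx' hxx' hθθ']

theorem antitoneOn_payoff_of_binding (hu : StrictIncreasingDifferences X u) {n i : ℕ}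
    {θ x t : ℕ → ℝ} (hθ : ∀ j k, j < k → k < n → θ j < θ k) (hxX : ∀ k, k < n → x k ∈ X)
    (hxmono : ∀ j k, j ≤ k → k < n → x j ≤ x k)
    (hbind : ∀ k, k + 1 < n →
      u (x (k + 1)) (θ (k + 1)) - t (k + 1) = u (x k) (θ (k + 1)) - t k) :
    AntitoneOn (fun k ↦ u (x k) (θ i) - t k) (Set.Ico i n) := by
  refine antitoneOn_of_add_one_le Set.ordConnected_Ico fun k _ hk hk1 ↦ ?_
  exact hu.payoff_le_of_indifferent (hxX k hk.2) (hxX (k + 1) hk1.2)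
    (hxmono k (k + 1) k.le_succ hk1.2) (hθ i (k + 1) (Nat.lt_succ_of_le hk.1) hk1.2).le (hbind k hk1.2)

end StrictIncreasingDifferences

/-- If the allocation rule is nondecreasing and every local downward IC constraint
IC[(i+1)→i] binds, then all upward IC constraints IC[i→j] (for i < j) are satisfied.
Types are `θ 0 < θ 1 < ⋯ < θ (n-1)`, allocations lie in `X`, and `u` has strict
increasing differences on `X × ℝ`. -/
theorem stmt10
    (n : ℕ) (X : Set ℝ) (u : ℝ → ℝ → ℝ)
    (hSID : ∀ x ∈ X, ∀ x' ∈ X, x < x' → ∀ θ θ' : ℝ, θ < θ' →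
      u x' θ - u x θ < u x' θ' - u x θ')
    (θ x t : ℕ → ℝ)
    (hθ : ∀ i j, i < j → j < n → θ i < θ j)
    (hxX : ∀ i, i < n → x i ∈ X)
    (hxmono : ∀ i j, i ≤ j → j < n → x i ≤ x j)
    (hbind : ∀ i, i + 1 < n →
      u (x (i + 1)) (θ (i + 1)) - t (i + 1) = u (x i) (θ (i + 1)) - t i) :
    ∀ i j, i < j → j < n → u (x i) (θ i) - t i ≥ u (x j) (θ i) - t j := by
  intro i j hij hjn
  have hanti := StrictIncreasingDifferences.antitoneOn_payoff_of_binding (i := i) hSID hθ hxX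
    hxmono hbind
  exact hanti ⟨le_rfl, hij.trans hjn⟩ ⟨hij.le, hjn⟩ hij.le
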